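/- arXiv:1210.2326 — 3 statements merged into one kernel-verified Lean document; each statement's English description precedes it below -/
import Mathlib

section
/- Define p*(α) = (2^α(3+α) − 4 − 2α)/(2 + 2^α(α−1)) for α > 1/2. Then p*(α) < 1 for all α ∈ (1/2, 1), and p*(1) = 1. -/
open Real

/-- The critical power `p*(α) = (2^α(3+α) − 4 − 2α)/(2 + 2^α(α−1))`. -/
noncomputable def pstar (α : ℝ) : ℝ :=
  ((2 : ℝ) ^ α * (3 + α) - 4 - 2 * α) / (2 + (2 : ℝ) ^ α * (α - 1))

lemma two_rpow_lt (α : ℝ) (h0 : 0 < α) (h1 : α < 1) : (2 : ℝ) ^ α < 1 + α := by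
  have key := strictConvexOn_exp.2 (Set.mem_univ (0 : ℝ)) (Set.mem_univ (Real.log 2))
    (by positivity) (by linarith) h0 (by ring : (1 - α) + α = 1)
  have hlog : Real.exp (Real.log 2) = 2 := Real.exp_log (by norm_num)
  simp only [smul_eq_mul, mul_zero, zero_add, Real.exp_zero, mul_one, hlog] at key
  have hrw : (2 : ℝ) ^ α = Real.exp (α * Real.log 2) := by
    rw [Real.rpow_def_of_pos (by norm_num), mul_comm]
  rw [hrw]
  linarith

theorem stmt2 :
    (∀ α : ℝ, 1 / 2 < α → α < 1 → pstar α < 1) ∧ pstar 1 = 1 := by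
  constructor
  · intro α hl hu
    have h0 : 0 < α := by linarith
    have hkey : (2 : ℝ) ^ α < 1 + α := two_rpow_lt α h0 hu
    have hpos : (0 : ℝ) < (2 : ℝ) ^ α := by positivity
    have hden : 0 < 2 + (2 : ℝ) ^ α * (α - 1) := by nlinarith
    rw [pstar, div_lt_one hden]
    nlinarith
  · rw [pstar, Real.rpow_one]
    norm_num
end

section
/- Define p*(α) = (2^α(3+α) − 4 − 2α)/(2 + 2^α(α−1)). Then p*(α) > 1 for all α > 1, and p*(α) < 2α for all α > 1/2. -/
open Real

/-! Both bounds reduce, after clearing the positive denominator, to polynomial inequalities in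
`α` and `2^α`. The lower bound follows from Bernoulli's inequality `1 + α ≤ 2^α`; the upper bound
`2^α (3 + 3α − 2α²) < 4 + 6α` is only at stake while `3 + 3α − 2α² > 0`, i.e. for `α < 3`, and
there it follows from the convexity of `x ↦ 2^x`, bounding `2^α` by its chords over `[0,1]`,
`[1,2]` and `[2,3]`. -/

lemma rpow_le_secant {c a b x : ℝ} (hc : 0 < c) (hax : a ≤ x) (hxb : x ≤ b) :
    (b - a) * c ^ x ≤ (b - x) * c ^ a + (x - a) * c ^ b := by
  rcases hax.eq_or_lt with rfl | hax
  · simp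
  rcases hxb.eq_or_lt with rfl | hxb
  · simp
  exact (convexOn_rpow_left hc).secant_mono_aux1 trivial trivial hax hxb

lemma pstar_denom_pos {α : ℝ} (hα : 0 ≤ α) : 0 < 2 + (2 : ℝ) ^ α * (α - 1) := by
  have h2α : 0 < (2 : ℝ) ^ α := by positivity
  rcases le_or_gt 1 α with h1 | h1
  · nlinarith
  · have : (2 : ℝ) ^ α < 2 := by
      simpa using rpow_lt_rpow_of_exponent_lt one_lt_two h1
    nlinarith

lemma one_lt_pstar_iff {α : ℝ} (hα : 0 ≤ α) : 1 < pstar α ↔ 6 + 2 * α < 4 * (2 : ℝ) ^ α := by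
  rw [pstar, lt_div_iff₀ (pstar_denom_pos hα)]
  constructor <;> intro h <;> linarith

lemma pstar_lt_two_mul_iff {α : ℝ} (hα : 0 ≤ α) :
    pstar α < 2 * α ↔ (2 : ℝ) ^ α * (3 + 3 * α - 2 * α ^ 2) < 4 + 6 * α := by
  rw [pstar, div_lt_iff₀ (pstar_denom_pos hα)]
  constructor <;> intro h <;> linarith

lemma six_add_two_mul_lt_four_mul_two_rpow {α : ℝ} (hα : 1 < α) :
    6 + 2 * α < 4 * (2 : ℝ) ^ α := by
  have := one_add_mul_self_le_rpow_one_add (s := 1) (by norm_num) hα.le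
  norm_num at this
  linarith

lemma two_rpow_mul_quadratic_lt {α : ℝ} (hα : 0 ≤ α) :
    (2 : ℝ) ^ α * (3 + 3 * α - 2 * α ^ 2) < 4 + 6 * α := by
  have h2α : 0 < (2 : ℝ) ^ α := by positivity
  have chord := fun a b (hax : a ≤ α) (hxb : α ≤ b) => rpow_le_secant (c := 2) two_pos hax hxb
  rcases le_or_gt (3 + 3 * α - 2 * α ^ 2) 0 with hq | hq
  · nlinarith [mul_nonpos_of_nonneg_of_nonpos h2α.le hq]
  rcases le_or_gt α 1 with h1 | h1
  · have := chord 0 1 hα h1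
    norm_num at this
    nlinarith
  rcases le_or_gt α 2 with h2 | h2
  · have := chord 1 2 h1.le h2
    norm_num at this
    nlinarith [mul_le_mul_of_nonneg_right this hq.le, mul_nonneg (sq_nonneg (α - 1)) hα]
  · have := chord 2 3 h2.le (by nlinarith)
    norm_num at this
    nlinarith

theorem stmt5 :
    (∀ α : ℝ, 1 < α → 1 < pstar α) ∧ (∀ α : ℝ, 1 / 2 < α → pstar α < 2 * α) :=
  ⟨fun _ hα => (one_lt_pstar_iff (by linarith)).2 (six_add_two_mul_lt_four_mul_two_rpow hα),
    fun _ hα => (pstar_lt_two_mul_iff (by linarith)).2 (two_rpow_mul_quadratic_lt (by linarith))⟩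
end

section
/- The discriminant Δ of the cubic whose roots are r₀ = ξ|κ|^α(|ξ|^α − 1)/(pξ), r₊ = (1+ξ)|κ|^α(|1+ξ|^α − 1)/(pξ), r₋ = (−1+ξ)|κ|^α(|−1+ξ|^α − 1)/(pξ) satisfies Δ = (|κ|^{6α}/(p⁶ξ⁶))·(A₁(ξ)A₁(−ξ)A₂(ξ))², where A₁(ξ) = −1 + (1+ξ)^{α+1} − ξ|ξ|^α and A₂(ξ) = −2 + (1−ξ)^{α+1} + (1+ξ)^{α+1}, for 0 < ξ < 1/2, κ > 0, p > 0, α > 0. -/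
open Real

/-- Explicit factorization of the discriminant of the monic cubic with roots
`r₀, r₊, r₋` coming from the three critical Bloch eigenvalues:
`Δ = (|κ|^{6α}/(p⁶ξ⁶)) (A₁(ξ)A₁(−ξ)A₂(ξ))²`. -/
theorem stmt16 (α p κ ξ : ℝ) (hα : 0 < α) (hp : 0 < p) (hκ : 0 < κ)
    (hξ0 : 0 < ξ) (hξ : ξ < 1 / 2)
    (r₀ rplus rminus A₁ξ A₁negξ A₂ξ Δ : ℝ)
    (hr₀ : r₀ = ξ * |κ| ^ α * (|ξ| ^ α - 1) / (p * ξ))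
    (hrplus : rplus = (1 + ξ) * |κ| ^ α * (|1 + ξ| ^ α - 1) / (p * ξ))
    (hrminus : rminus = (-1 + ξ) * |κ| ^ α * (|(-1 : ℝ) + ξ| ^ α - 1) / (p * ξ))
    (hA₁ : A₁ξ = -1 + (1 + ξ) ^ (α + 1) - ξ * |ξ| ^ α)
    (hA₁neg : A₁negξ = -1 + (1 - ξ) ^ (α + 1) + ξ * |(-ξ)| ^ α)
    (hA₂ : A₂ξ = -2 + (1 - ξ) ^ (α + 1) + (1 + ξ) ^ (α + 1))
    (hΔ : Δ = (r₀ - rplus) ^ 2 * (r₀ - rminus) ^ 2 * (rplus - rminus) ^ 2) :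
    Δ = |κ| ^ (6 * α) / (p ^ 6 * ξ ^ 6) * (A₁ξ * A₁negξ * A₂ξ) ^ 2 := by
  have h1 : |ξ| = ξ := abs_of_pos hξ0
  have h2 : |1 + ξ| = 1 + ξ := abs_of_pos (by linarith)
  have h3 : |(-1:ℝ) + ξ| = 1 - ξ := by
    rw [abs_of_neg (by linarith)]; ring
  have h4 : |(-ξ)| = ξ := by rw [abs_neg, h1]
  have e1 : (1 + ξ) ^ (α + 1) = (1 + ξ) ^ α * (1 + ξ) := by
    rw [rpow_add (by linarith), rpow_one]
  have e2 : (1 - ξ) ^ (α + 1) = (1 - ξ) ^ α * (1 - ξ) := by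
    rw [rpow_add (by linarith), rpow_one]
  have e3 : |κ| ^ (6 * α) = (|κ| ^ α) ^ (6:ℕ) := by
    rw [show (6:ℝ) * α = α * 6 by ring, rpow_mul (abs_nonneg κ)]
    rw [show (6:ℝ) = ((6:ℕ):ℝ) by norm_num, rpow_natCast]
  subst hr₀ hrplus hrminus hA₁ hA₁neg hA₂ hΔ
  rw [h1, h2, h3, h4, e1, e2, e3]
  have hpξ : p * ξ ≠ 0 := by positivity
  field_simp
  ring
end
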